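/- arXiv:2203.01896 — 3 statements merged into one kernel-verified Lean document; each statement's English description precedes it below -/
import Mathlib

section
/- Let G be a full DAG (every inner vertex has in-degree 2 and out-degree 2) with an ample framing F. Then every exceptional route R either passes through every inner vertex it contains using the edges that are smallest in the framing's linear orders, or passes through every inner vertex it contains using the edges that are largest in the framing's linear orders. -/
/-- A finite directed acyclic multigraph. -/
structure DAG where
  V : Type
  E : Type
  [fintypeV : Fintype V]
  [fintypeE : Fintype E]
  [decEqV : DecidableEq V]
  [decEqE : DecidableEq E]
  src : E → V
  tgt : E → V
  acyclic : ∀ v : V,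
    ¬ Relation.TransGen (fun a b : V => ∃ e : E, src e = a ∧ tgt e = b) v v

attribute [instance] DAG.fintypeV DAG.fintypeE DAG.decEqV DAG.decEqE

namespace DAG

variable (G : DAG)

/-- A vertex with no incoming edges. -/
def IsSource (v : G.V) : Prop := ∀ e : G.E, G.tgt e ≠ v

/-- A vertex with no outgoing edges. -/
def IsSink (v : G.V) : Prop := ∀ e : G.E, G.src e ≠ v

/-- An inner vertex is neither a source nor a sink. -/
def IsInner (v : G.V) : Prop := ¬ G.IsSource v ∧ ¬ G.IsSink v

instance : DecidablePred G.IsSource := fun v =>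
  decidable_of_iff (∀ e : G.E, G.tgt e ≠ v) Iff.rfl

instance : DecidablePred G.IsSink := fun v =>
  decidable_of_iff (∀ e : G.E, G.src e ≠ v) Iff.rfl

instance : DecidablePred G.IsInner := fun v =>
  decidable_of_iff (¬ G.IsSource v ∧ ¬ G.IsSink v) Iff.rfl

/-- In-degree: the number of edges with target `v`. -/
def indeg (v : G.V) : ℕ := Fintype.card {e : G.E // G.tgt e = v}

/-- Out-degree: the number of edges with source `v`. -/
def outdeg (v : G.V) : ℕ := Fintype.card {e : G.E // G.src e = v}

/-- A DAG is full if every inner vertex has in-degree 2 and out-degree 2. -/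
def Full : Prop := ∀ v : G.V, G.IsInner v → G.indeg v = 2 ∧ G.outdeg v = 2

/-- A route: a maximal directed path, i.e. a nonempty list of consecutive edges
starting at a source and ending at a sink. -/
structure Route where
  edges : List G.E
  ne : edges ≠ []
  chain : edges.Chain' (fun e f => G.tgt e = G.src f)
  source_start : G.IsSource (G.src (edges.head ne))
  sink_end : G.IsSink (G.tgt (edges.getLast ne))

/-- A route visits a vertex if the vertex is an endpoint of one of its edges. -/
def Route.visits (R : G.Route) (v : G.V) : Prop :=
  ∃ e ∈ R.edges, G.src e = v ∨ G.tgt e = v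

/-- A framing: a linear order on the incoming edges and a linear order on the
outgoing edges of every inner vertex. -/
structure Framing where
  inlt : G.E → G.E → Prop
  outlt : G.E → G.E → Prop
  inlt_tgt : ∀ {e f}, inlt e f → G.tgt e = G.tgt f
  inlt_inner : ∀ {e f}, inlt e f → G.IsInner (G.tgt e)
  inlt_irrefl : ∀ e, ¬ inlt e e
  inlt_trans : ∀ {e f g}, inlt e f → inlt f g → inlt e g
  inlt_total : ∀ e f, G.tgt e = G.tgt f → G.IsInner (G.tgt e) → e ≠ f →
    inlt e f ∨ inlt f e
  outlt_src : ∀ {e f}, outlt e f → G.src e = G.src f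
  outlt_inner : ∀ {e f}, outlt e f → G.IsInner (G.src e)
  outlt_irrefl : ∀ e, ¬ outlt e e
  outlt_trans : ∀ {e f g}, outlt e f → outlt f g → outlt e g
  outlt_total : ∀ e f, G.src e = G.src f → G.IsInner (G.src e) → e ≠ f →
    outlt e f ∨ outlt f e

/-- The induced order on paths ending at a common vertex: compare the two edges
just before the longest common suffix. -/
def inPathLt (F : G.Framing) (P Q : List G.E) : Prop :=
  ∃ (p q s : List G.E) (e f : G.E), e ≠ f ∧
    P = p ++ e :: s ∧ Q = q ++ f :: s ∧ F.inlt e f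

/-- The induced order on paths starting at a common vertex: compare the two edges
just after the longest common prefix. -/
def outPathLt (F : G.Framing) (P Q : List G.E) : Prop :=
  ∃ (s p q : List G.E) (e f : G.E), e ≠ f ∧
    P = s ++ e :: p ∧ Q = s ++ f :: q ∧ F.outlt e f

/-- Routes `P` and `Q` are in conflict (with `P` playing the first role) if they
pass through a common inner vertex `v` with `Pv ≺ Qv` in the in-order and
`vQ ≺ vP` in the out-order. -/
def Conflict (F : G.Framing) (P Q : G.Route) : Prop :=
  ∃ (v : G.V) (a b c d : List G.E) (ea ec : G.E),
    P.edges = a ++ [ea] ++ b ∧ Q.edges = c ++ [ec] ++ d ∧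
    G.tgt ea = v ∧ G.tgt ec = v ∧ b ≠ [] ∧ d ≠ [] ∧
    G.inPathLt F (a ++ [ea]) (c ++ [ec]) ∧ G.outPathLt F d b

/-- Two routes are coherent if they are not in conflict at any common inner
vertex (in either order). -/
def CoherentPair (F : G.Framing) (P Q : G.Route) : Prop :=
  ¬ G.Conflict F P Q ∧ ¬ G.Conflict F Q P

/-- A route is exceptional if it is coherent with every route. -/
def Exceptional (F : G.Framing) (R : G.Route) : Prop :=
  ∀ S : G.Route, G.CoherentPair F R S

/-- An edge is idle if it is the unique incoming or the unique outgoing edge of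
an inner vertex. -/
def Idle (e : G.E) : Prop :=
  (G.IsInner (G.tgt e) ∧ ∀ f : G.E, G.tgt f = G.tgt e → f = e) ∨
  (G.IsInner (G.src e) ∧ ∀ f : G.E, G.src f = G.src e → f = e)

/-- A framing is ample if every non-idle edge lies on an exceptional route. -/
def Ample (F : G.Framing) : Prop :=
  ∀ e : G.E, ¬ G.Idle e → ∃ R : G.Route, G.Exceptional F R ∧ e ∈ R.edges

/-- `e` is smallest among the edges entering its target. -/
def MinIn (F : G.Framing) (e : G.E) : Prop :=
  ∀ f : G.E, G.tgt f = G.tgt e → f ≠ e → F.inlt e f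

/-- `e` is largest among the edges entering its target. -/
def MaxIn (F : G.Framing) (e : G.E) : Prop :=
  ∀ f : G.E, G.tgt f = G.tgt e → f ≠ e → F.inlt f e

/-- `e` is smallest among the edges leaving its source. -/
def MinOut (F : G.Framing) (e : G.E) : Prop :=
  ∀ f : G.E, G.src f = G.src e → f ≠ e → F.outlt e f

/-- `e` is largest among the edges leaving its source. -/
def MaxOut (F : G.Framing) (e : G.E) : Prop :=
  ∀ f : G.E, G.src f = G.src e → f ≠ e → F.outlt f e

/-- The characteristic vector of a route. -/
noncomputable def charVec (R : G.Route) : G.E → ℝ :=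
  fun e => if e ∈ R.edges then 1 else 0

end DAG

/-!
If an exceptional route `R` entered an inner vertex `v` through its smallest edge `e` and later
left an inner vertex `w` through its largest edge `h`, then replacing `e` by the other edge into
`v` and `h` by the other edge out of `w`, and extending to a maximal path, gives a route `S` with
`Rw ≺ Sw` and `wS ≺ wR`, i.e. in conflict with `R` at `w`; symmetrically with the roles of
smallest and largest exchanged. In a full DAG every edge is either smallest or largest at each
inner end, so along `R` the edge used to enter a vertex has the same type as every edge used to
leave a later vertex. Hence all entering edges of `R` share one type, and so do the leaving
edges, each leaving edge having the type of the edge just before it.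
-/

open Relation

theorem Finite.wellFounded_of_forall_not_transGen {α : Type*} [Finite α] {r : α → α → Prop}
    (h : ∀ a, ¬ TransGen r a a) : WellFounded r :=
  have : IsTrans α (TransGen r) := ⟨fun _ _ _ => TransGen.trans⟩
  have : Std.Irrefl (TransGen r) := ⟨h⟩
  Subrelation.wf TransGen.single (Finite.wellFounded_of_trans_of_irrefl (TransGen r))

theorem List.exists_eq_append_cons_append_cons_of_pair_sublist {α : Type*} {x y : α}
    {l : List α} (h : [x, y].Sublist l) : ∃ A m B, l = A ++ x :: (m ++ y :: B) := by
  obtain ⟨r₁, r₂, rfl, hx, hy⟩ := List.cons_sublist_iff.mp h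
  obtain ⟨A, m₁, rfl⟩ := List.append_of_mem hx
  obtain ⟨m₂, B, rfl⟩ := List.append_of_mem (List.singleton_sublist.mp hy)
  exact ⟨A, m₁ ++ m₂, B, by simp⟩

theorem exists_ne_of_card_subtype_eq_two {α : Type*} [Fintype α] {p : α → Prop}
    [DecidablePred p] (hcard : Fintype.card {x // p x} = 2) {a : α} (ha : p a) :
    ∃ b, p b ∧ b ≠ a ∧ ∀ c, p c → c = a ∨ c = b := by
  rw [← Nat.card_eq_fintype_card] at hcard
  obtain ⟨⟨b, hb⟩, hba, hall⟩ := (Nat.card_eq_two_iff' (⟨a, ha⟩ : {x // p x})).mp hcard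
  refine ⟨b, hb, fun h => hba (Subtype.ext h), fun c hc => ?_⟩
  by_cases hca : c = a
  · exact Or.inl hca
  · exact Or.inr (congrArg Subtype.val (hall ⟨c, hc⟩ fun h => hca (congrArg Subtype.val h)))

namespace DAG

section Paths

variable (G : DAG)

theorem wellFounded_succ : WellFounded fun b a : G.V => ∃ e, G.src e = a ∧ G.tgt e = b :=
  Finite.wellFounded_of_forall_not_transGen fun v hv => G.acyclic v (transGen_swap.mp hv)

theorem wellFounded_pred : WellFounded fun a b : G.V => ∃ e, G.src e = a ∧ G.tgt e = b :=
  Finite.wellFounded_of_forall_not_transGen G.acyclic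

variable {G}

theorem exists_isChain_append_isSink {l : List G.E} (hne : l ≠ [])
    (hch : l.IsChain fun e f => G.tgt e = G.src f) :
    ∃ t, (l ++ t).IsChain (fun e f => G.tgt e = G.src f) ∧
      G.IsSink (G.tgt ((l ++ t).getLast (by simp [hne]))) := by
  induction hv : G.tgt (l.getLast hne) using G.wellFounded_succ.induction generalizing l with
  | _ v ih =>
  by_cases hsink : G.IsSink v
  · exact ⟨[], by simpa using hch, by simpa [hv] using hsink⟩
  · obtain ⟨e, he⟩ : ∃ e, G.src e = v := by simpa [IsSink] using hsink
    have hch' : (l ++ [e]).IsChain fun e f => G.tgt e = G.src f :=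
      hch.append (List.isChain_singleton e) (by simp [List.getLast?_eq_some_getLast hne, hv, he])
    obtain ⟨t, ht, hsink'⟩ := ih (G.tgt e) ⟨e, he, rfl⟩ (by simp) hch' (by simp)
    exact ⟨e :: t, by simpa using ht, by simpa using hsink'⟩

theorem exists_isChain_append_isSource {l : List G.E} (hne : l ≠ [])
    (hch : l.IsChain fun e f => G.tgt e = G.src f) :
    ∃ s, (s ++ l).IsChain (fun e f => G.tgt e = G.src f) ∧
      G.IsSource (G.src ((s ++ l).head (by simp [hne]))) := by
  induction hv : G.src (l.head hne) using G.wellFounded_pred.induction generalizing l with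
  | _ v ih =>
  by_cases hsource : G.IsSource v
  · exact ⟨[], by simpa using hch, by simpa [hv] using hsource⟩
  · obtain ⟨e, he⟩ : ∃ e, G.tgt e = v := by simpa [IsSource] using hsource
    have hch' : (e :: l).IsChain fun e f => G.tgt e = G.src f :=
      hch.cons_of_ne_nil hne (he.trans hv.symm)
    obtain ⟨s, hs, hsource'⟩ := ih (G.src e) ⟨e, rfl, he⟩ (by simp) hch' (by simp)
    exact ⟨s ++ [e], by simpa using hs, by simpa using hsource'⟩

theorem exists_route_infix {l : List G.E} (hne : l ≠ [])
    (hch : l.IsChain fun e f => G.tgt e = G.src f) :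
    ∃ (S : G.Route) (p q : List G.E), S.edges = p ++ l ++ q := by
  obtain ⟨t, ht, hsink⟩ := exists_isChain_append_isSink hne hch
  have hne' : l ++ t ≠ [] := by simp [hne]
  obtain ⟨s, hs, hsource⟩ := exists_isChain_append_isSource hne' ht
  refine ⟨⟨s ++ (l ++ t), by simp [hne], hs, hsource, ?_⟩, s, t, by simp⟩
  rwa [List.getLast_append_of_ne_nil _ hne']

namespace Route

variable (R : G.Route)

theorem tgt_eq_src {A B : List G.E} {e h : G.E} (hR : R.edges = A ++ e :: h :: B) :
    G.tgt e = G.src h :=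
  (List.isChain_pair (R := fun e f : G.E => G.tgt e = G.src f)).mp
    (R.chain.infix ⟨A, B, by simp [hR]⟩)

theorem exists_next {A B : List G.E} {e : G.E} (hR : R.edges = A ++ e :: B)
    (hv : G.IsInner (G.tgt e)) : ∃ h B', B = h :: B' := by
  rcases B with _ | ⟨h, B'⟩
  · exact absurd (by simpa [hR] using R.sink_end) hv.2
  · exact ⟨h, B', rfl⟩

theorem exists_prev {A B : List G.E} {e : G.E} (hR : R.edges = A ++ e :: B)
    (hv : G.IsInner (G.src e)) : ∃ A' f, A = A' ++ [f] := by
  rcases A.eq_nil_or_concat' with rfl | ⟨A', f, rfl⟩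
  · exact absurd (by simpa [hR] using R.source_start) hv.1
  · exact ⟨A', f, rfl⟩

end Route

theorem exists_route_swap_ends {R : G.Route} {A m B : List G.E} {e h f k : G.E}
    (hR : R.edges = A ++ e :: (m ++ h :: B)) (hf : G.tgt f = G.tgt e) (hk : G.src k = G.src h) :
    ∃ (S : G.Route) (p q : List G.E), S.edges = p ++ f :: (m ++ k :: q) := by
  have hch : (e :: m ++ [h]).IsChain fun e f => G.tgt e = G.src f :=
    R.chain.infix ⟨A, B, by simp [hR]⟩
  have hch' : (f :: m ++ [k]).IsChain fun e f => G.tgt e = G.src f := by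
    obtain ⟨hem, -, hlast⟩ := List.isChain_append.mp hch
    refine (hem.imp_head (R := fun e f : G.E => G.tgt e = G.src f) fun hz => hf.trans hz).append
      (List.isChain_singleton k) ?_
    simp only [List.getLast?_cons, List.head?_cons, Option.mem_def, Option.some.injEq,
      forall_eq'] at hlast ⊢
    generalize m.getLast? = z at hlast ⊢
    cases z <;> simp_all
  obtain ⟨S, p, q, hS⟩ := exists_route_infix (by simp) hch'
  exact ⟨S, p, q, by simp [hS]⟩

end Paths

section Conflicts

variable {G : DAG} {F : G.Framing}

theorem conflict_of_edges_eq_append {P Q : G.Route} {a b c d : List G.E}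
    (hP : P.edges = a ++ b) (hQ : Q.edges = c ++ d)
    (hin : G.inPathLt F a c) (hout : G.outPathLt F d b) : G.Conflict F P Q := by
  obtain ⟨a', ea, rfl⟩ : ∃ a' ea, a = a' ++ [ea] := by
    obtain ⟨p, -, s, e, -, -, ha, -⟩ := hin
    exact (a.eq_nil_or_concat').resolve_left (by simp [ha])
  obtain ⟨c', ec, rfl⟩ : ∃ c' ec, c = c' ++ [ec] := by
    obtain ⟨-, q, s, -, f, -, -, hc, -⟩ := hin
    exact (c.eq_nil_or_concat').resolve_left (by simp [hc])
  obtain ⟨s, d', b', k, h, hkh, rfl, rfl, hlt⟩ := hout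
  -- when the common prefix `s` is nonempty, `b` and `d` start with the same edge
  obtain ⟨y, z, b'', d'', hb, hd, hyz⟩ : ∃ y z b'' d'',
      s ++ h :: b' = y :: b'' ∧ s ++ k :: d' = z :: d'' ∧ G.src y = G.src z := by
    cases s with
    | nil => exact ⟨h, k, b', d', rfl, rfl, (F.outlt_src hlt).symm⟩
    | cons x s => exact ⟨x, x, _, _, rfl, rfl, rfl⟩
  refine ⟨G.tgt ea, a', s ++ h :: b', c', s ++ k :: d', ea, ec, hP, hQ, rfl, ?_, by simp, by simp,
    hin, ⟨s, d', b', k, h, hkh, rfl, rfl, hlt⟩⟩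
  have hPv : G.tgt ea = G.src y :=
    P.tgt_eq_src (by simp [hP, hb] : P.edges = a' ++ ea :: y :: b'')
  have hQv : G.tgt ec = G.src z :=
    Q.tgt_eq_src (by simp [hQ, hd] : Q.edges = c' ++ ec :: z :: d'')
  rw [hPv, hQv, hyz]

theorem not_minIn_maxOut_and_not_maxIn_minOut {R : G.Route} (hexc : G.Exceptional F R)
    {A m B : List G.E} {e h f k : G.E} (hR : R.edges = A ++ e :: (m ++ h :: B))
    (hf : G.tgt f = G.tgt e) (hfe : f ≠ e) (hk : G.src k = G.src h) (hkh : k ≠ h) :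
    ¬ (G.MinIn F e ∧ G.MaxOut F h) ∧ ¬ (G.MaxIn F e ∧ G.MinOut F h) := by
  obtain ⟨S, p, q, hS⟩ := exists_route_swap_ends hR hf hk
  have hR' : R.edges = (A ++ e :: m) ++ h :: B := by simp [hR]
  have hS' : S.edges = (p ++ f :: m) ++ k :: q := by simp [hS]
  refine ⟨fun ⟨he, hh⟩ => (hexc S).1 ?_, fun ⟨he, hh⟩ => (hexc S).2 ?_⟩
  · exact conflict_of_edges_eq_append hR' hS' ⟨A, p, m, e, f, hfe.symm, rfl, rfl, he f hf hfe⟩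
      ⟨[], q, B, k, h, hkh, rfl, rfl, hh k hk hkh⟩
  · exact conflict_of_edges_eq_append hS' hR' ⟨p, A, m, f, e, hfe, rfl, rfl, he f hf hfe⟩
      ⟨[], B, q, h, k, hkh.symm, rfl, rfl, hh k hk hkh⟩

end Conflicts

section Full

variable {G : DAG} (hfull : G.Full) (F : G.Framing)
include hfull

theorem exists_ne_tgt_eq {e : G.E} (hv : G.IsInner (G.tgt e)) :
    ∃ f, G.tgt f = G.tgt e ∧ f ≠ e ∧ ∀ g, G.tgt g = G.tgt e → g = e ∨ g = f :=
  exists_ne_of_card_subtype_eq_two (hfull _ hv).1 rfl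

theorem exists_ne_src_eq {e : G.E} (hv : G.IsInner (G.src e)) :
    ∃ f, G.src f = G.src e ∧ f ≠ e ∧ ∀ g, G.src g = G.src e → g = e ∨ g = f :=
  exists_ne_of_card_subtype_eq_two (hfull _ hv).2 rfl

theorem maxIn_iff_not_minIn {e : G.E} (hv : G.IsInner (G.tgt e)) :
    G.MaxIn F e ↔ ¬ G.MinIn F e := by
  obtain ⟨f, hf, hfe, hall⟩ := exists_ne_tgt_eq hfull hv
  have hmin : G.MinIn F e ↔ F.inlt e f :=
    ⟨fun h => h f hf hfe, fun h g hg hge => (hall g hg).resolve_left hge ▸ h⟩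
  have hmax : G.MaxIn F e ↔ F.inlt f e :=
    ⟨fun h => h f hf hfe, fun h g hg hge => (hall g hg).resolve_left hge ▸ h⟩
  rw [hmin, hmax]
  exact ⟨fun hfe' hef => F.inlt_irrefl e (F.inlt_trans hef hfe'),
    (F.inlt_total e f hf.symm hv hfe.symm).resolve_left⟩

theorem maxOut_iff_not_minOut {e : G.E} (hv : G.IsInner (G.src e)) :
    G.MaxOut F e ↔ ¬ G.MinOut F e := by
  obtain ⟨f, hf, hfe, hall⟩ := exists_ne_src_eq hfull hv
  have hmin : G.MinOut F e ↔ F.outlt e f :=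
    ⟨fun h => h f hf hfe, fun h g hg hge => (hall g hg).resolve_left hge ▸ h⟩
  have hmax : G.MaxOut F e ↔ F.outlt f e :=
    ⟨fun h => h f hf hfe, fun h g hg hge => (hall g hg).resolve_left hge ▸ h⟩
  rw [hmin, hmax]
  exact ⟨fun hfe' hef => F.outlt_irrefl e (F.outlt_trans hef hfe'),
    (F.outlt_total e f hf.symm hv hfe.symm).resolve_left⟩

variable {F} {R : G.Route} (hexc : G.Exceptional F R)
include hexc

theorem minIn_iff_minOut {A m B : List G.E} {e h : G.E} (hR : R.edges = A ++ e :: (m ++ h :: B))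
    (hv : G.IsInner (G.tgt e)) (hw : G.IsInner (G.src h)) : G.MinIn F e ↔ G.MinOut F h := by
  obtain ⟨f, hf, hfe, -⟩ := exists_ne_tgt_eq hfull hv
  obtain ⟨k, hk, hkh, -⟩ := exists_ne_src_eq hfull hw
  obtain ⟨hminmax, hmaxmin⟩ := not_minIn_maxOut_and_not_maxIn_minOut hexc hR hf hfe hk hkh
  constructor
  · exact fun he => by_contra fun hh => hminmax ⟨he, (maxOut_iff_not_minOut hfull F hw).2 hh⟩
  · exact fun hh => by_contra fun he => hmaxmin ⟨(maxIn_iff_not_minIn hfull F hv).2 he, hh⟩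

theorem pairwise_minIn_iff_minIn :
    R.edges.Pairwise fun x y =>
      G.IsInner (G.tgt x) → G.IsInner (G.tgt y) → (G.MinIn F x ↔ G.MinIn F y) := by
  refine List.pairwise_of_forall_sublist fun {x y} hxy hx hy => ?_
  obtain ⟨A, m, B, hR⟩ := List.exists_eq_append_cons_append_cons_of_pair_sublist hxy
  obtain ⟨h, B', rfl⟩ := R.exists_next (by simp [hR] : R.edges = (A ++ x :: m) ++ y :: B) hy
  have hxh : R.edges = A ++ x :: ((m ++ [y]) ++ h :: B') := by simp [hR]
  have hyh : R.edges = (A ++ x :: m) ++ y :: ([] ++ h :: B') := by simp [hR]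
  have hw : G.IsInner (G.src h) := R.tgt_eq_src hyh ▸ hy
  rw [minIn_iff_minOut hfull hexc hxh hx hw, minIn_iff_minOut hfull hexc hyh hy hw]

theorem minIn_iff_minIn {x y : G.E} (hx : x ∈ R.edges) (hy : y ∈ R.edges)
    (hvx : G.IsInner (G.tgt x)) (hvy : G.IsInner (G.tgt y)) : G.MinIn F x ↔ G.MinIn F y :=
  have hpw := pairwise_minIn_iff_minIn hfull hexc
  hpw.forall_of_forall_of_flip (fun _ _ _ _ => Iff.rfl)
    (hpw.imp fun h hy hx => (h hx hy).symm) hx hy hvx hvy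

theorem exists_minOut_iff_minIn {h : G.E} (hh : h ∈ R.edges) (hw : G.IsInner (G.src h)) :
    ∃ p ∈ R.edges, G.IsInner (G.tgt p) ∧ (G.MinOut F h ↔ G.MinIn F p) := by
  obtain ⟨A, B, hR⟩ := List.append_of_mem hh
  obtain ⟨A, p, rfl⟩ := R.exists_prev hR hw
  have hR' : R.edges = A ++ p :: ([] ++ h :: B) := by simp [hR]
  have hv : G.IsInner (G.tgt p) := (R.tgt_eq_src hR').symm ▸ hw
  exact ⟨p, by simp [hR], hv, (minIn_iff_minOut hfull hexc hR' hv hw).symm⟩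

end Full

end DAG

theorem exceptional_all_min_or_all_max_general (G : DAG) (F : G.Framing)
    (hfull : G.Full)
    (R : G.Route) (hexc : G.Exceptional F R) :
    (∀ e ∈ R.edges, (G.IsInner (G.tgt e) → G.MinIn F e) ∧
        (G.IsInner (G.src e) → G.MinOut F e)) ∨
    (∀ e ∈ R.edges, (G.IsInner (G.tgt e) → G.MaxIn F e) ∧
        (G.IsInner (G.src e) → G.MaxOut F e)) := by
  by_cases hmin : ∀ x ∈ R.edges, G.IsInner (G.tgt x) → G.MinIn F x
  · refine Or.inl fun e he => ⟨hmin e he, fun hw => ?_⟩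
    obtain ⟨p, hp, hvp, hiff⟩ := DAG.exists_minOut_iff_minIn hfull hexc he hw
    exact hiff.2 (hmin p hp hvp)
  · push Not at hmin
    obtain ⟨x, hx, hvx, hnx⟩ := hmin
    refine Or.inr fun e he => ⟨fun hv => ?_, fun hw => ?_⟩
    · rw [DAG.maxIn_iff_not_minIn hfull F hv, DAG.minIn_iff_minIn hfull hexc he hx hv hvx]
      exact hnx
    · obtain ⟨p, hp, hvp, hiff⟩ := DAG.exists_minOut_iff_minIn hfull hexc he hw
      rw [DAG.maxOut_iff_not_minOut hfull F hw, hiff, DAG.minIn_iff_minIn hfull hexc hp hx hvp hvx]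
      exact hnx

/-- In a full DAG with ample framing, every exceptional route
passes through all its inner vertices using smallest edges, or through all of
them using largest edges. -/
theorem exceptional_all_min_or_all_max (G : DAG) (F : G.Framing)
    (hfull : G.Full) (hample : G.Ample F)
    (R : G.Route) (hexc : G.Exceptional F R) :
    (∀ e ∈ R.edges, (G.IsInner (G.tgt e) → G.MinIn F e) ∧
        (G.IsInner (G.src e) → G.MinOut F e)) ∨
    (∀ e ∈ R.edges, (G.IsInner (G.tgt e) → G.MaxIn F e) ∧
        (G.IsInner (G.src e) → G.MaxOut F e)) :=
  exceptional_all_min_or_all_max_general G F hfull R hexc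
end

section
/- Let G be a full DAG with an ample framing F. Then every edge of G lies on exactly one exceptional route. -/
namespace DAG

variable {G : DAG}

/-- Routes with equal edge lists are equal. -/
lemma Route.ext' {R S : G.Route} (h : R.edges = S.edges) : R = S := by
  cases R; cases S; simp only at h; subst h; rfl

lemma Route.adj {R : G.Route} {a b : List G.E} {e f : G.E}
    (h : R.edges = a ++ e :: f :: b) : G.tgt e = G.src f := by
  have hc := R.chain
  rw [h, List.Chain', List.isChain_append_cons_cons] at hc
  exact hc.2.1

lemma Route.sink_of_eq {R : G.Route} {a : List G.E} {e : G.E}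
    (h : R.edges = a ++ [e]) : G.IsSink (G.tgt e) := by
  have hs := R.sink_end
  rcases R with ⟨E, ne, _, _, _⟩
  simp only at h hs
  subst h
  rwa [List.getLast_append] at hs

lemma Route.source_of_eq {R : G.Route} {b : List G.E} {e : G.E}
    (h : R.edges = e :: b) : G.IsSource (G.src e) := by
  have hs := R.source_start
  rcases R with ⟨E, ne, _, _, _⟩
  simp only at h hs
  subst h
  exact hs

lemma inner_of {v : G.V} {e f : G.E} (he : G.tgt e = v) (hf : G.src f = v) :
    G.IsInner v :=
  ⟨fun h => h e he, fun h => h f hf⟩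

private lemma getLast_eq_of_concat {α : Type} {l l' : List α} {x : α}
    (h : l = l' ++ [x]) {hne : l ≠ []} : l.getLast hne = x := by
  subst h; exact List.getLast_append _

private lemma wf_aux {α : Type} [Finite α] (r : α → α → Prop)
    (h : ∀ a, ¬ Relation.TransGen r a a) : WellFounded r := by
  have ht : IsTrans α (Relation.TransGen r) := ⟨fun _ _ _ => Relation.TransGen.trans⟩
  have hi : IsIrrefl α (Relation.TransGen r) := ⟨h⟩
  exact Subrelation.wf (fun hr => Relation.TransGen.single hr)
    (Finite.wellFounded_of_trans_of_irrefl _)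

lemma wf_fwd (G : DAG) :
    WellFounded (fun b a : G.V => ∃ e : G.E, G.src e = a ∧ G.tgt e = b) := by
  apply wf_aux
  intro a ha
  exact G.acyclic a (Relation.transGen_swap.mp ha)

lemma wf_bwd (G : DAG) :
    WellFounded (fun a b : G.V => ∃ e : G.E, G.src e = a ∧ G.tgt e = b) := by
  apply wf_aux
  intro a ha
  exact G.acyclic a ha

/-- Forward extension of a vertex to a sink. -/
lemma exists_fwd (G : DAG) (v : G.V) :
    ∃ L : List G.E, L.Chain' (fun e f => G.tgt e = G.src f) ∧
      (∀ h : L ≠ [], G.src (L.head h) = v) ∧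
      (L = [] → G.IsSink v) ∧
      (∀ h : L ≠ [], G.IsSink (G.tgt (L.getLast h))) := by
  induction v using WellFounded.induction G.wf_fwd with
  | _ v ih =>
    by_cases hs : G.IsSink v
    · exact ⟨[], List.isChain_nil, fun h => absurd rfl h, fun _ => hs, fun h => absurd rfl h⟩
    · obtain ⟨f, hf⟩ : ∃ f, G.src f = v := by
        simpa [IsSink, not_forall] using hs
      obtain ⟨L, hc, hh, he, hl⟩ := ih (G.tgt f) ⟨f, hf, rfl⟩
      refine ⟨f :: L, ?_, fun _ => hf, by simp, ?_⟩
      · refine List.isChain_cons.mpr ⟨?_, hc⟩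
        intro y hy
        cases L with
        | nil => simp at hy
        | cons g L' =>
          simp only [List.head?_cons, Option.mem_def, Option.some.injEq] at hy
          rw [← hy]
          exact (hh (by simp)).symm
      · intro h
        cases L with
        | nil => simpa using he rfl
        | cons g L' =>
          rw [List.getLast_cons (by simp)]
          exact hl (by simp)

/-- Backward extension of a vertex to a source. -/
lemma exists_bwd (G : DAG) (v : G.V) :
    ∃ L : List G.E, L.Chain' (fun e f => G.tgt e = G.src f) ∧
      (∀ h : L ≠ [], G.tgt (L.getLast h) = v) ∧
      (L = [] → G.IsSource v) ∧
      (∀ h : L ≠ [], G.IsSource (G.src (L.head h))) := by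
  induction v using WellFounded.induction G.wf_bwd with
  | _ v ih =>
    by_cases hs : G.IsSource v
    · exact ⟨[], List.isChain_nil, fun h => absurd rfl h, fun _ => hs, fun h => absurd rfl h⟩
    · obtain ⟨f, hf⟩ : ∃ f, G.tgt f = v := by
        simpa [IsSource, not_forall] using hs
      obtain ⟨L, hc, hl, he, hh⟩ := ih (G.src f) ⟨f, rfl, hf⟩
      refine ⟨L ++ [f], ?_, ?_, by simp, ?_⟩
      · rw [List.Chain', List.isChain_append]
        refine ⟨hc, List.isChain_singleton f, ?_⟩
        intro x hx y hy
        simp only [List.head?_cons, Option.mem_def, Option.some.injEq] at hy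
        subst hy
        cases L with
        | nil => simp at hx
        | cons g L' =>
          rw [List.getLast?_eq_getLast (l := g :: L') (by simp)] at hx
          simp only [Option.mem_def, Option.some.injEq] at hx
          rw [← hx]
          exact hl (by simp)
      · intro h
        rw [List.getLast_append]
        exact hf
      · intro h
        cases L with
        | nil => simpa using he rfl
        | cons g L' =>
          rw [List.head_append_of_ne_nil (by simp)]
          exact hh (by simp)

/-- Any consecutive pair of edges extends to a route. -/
lemma exists_route_pair (G : DAG) (e f : G.E) (h : G.tgt e = G.src f) :
    ∃ (S : G.Route) (c d : List G.E), S.edges = c ++ e :: f :: d := by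
  obtain ⟨A, hAc, hAl, hAe, hAh⟩ := G.exists_bwd (G.src e)
  obtain ⟨B, hBc, hBh, hBe, hBl⟩ := G.exists_fwd (G.tgt f)
  have hchain : (A ++ e :: f :: B).Chain' (fun e f => G.tgt e = G.src f) := by
    rw [List.Chain', List.isChain_append_cons_cons]
    refine ⟨?_, h, ?_⟩
    · rw [List.isChain_append]
      refine ⟨hAc, List.isChain_singleton e, ?_⟩
      intro x hx y hy
      simp only [List.head?_cons, Option.mem_def, Option.some.injEq] at hy
      subst hy
      cases A with
      | nil => simp at hx
      | cons g A' =>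
        rw [List.getLast?_eq_getLast (l := g :: A') (by simp)] at hx
        simp only [Option.mem_def, Option.some.injEq] at hx
        rw [← hx]
        exact hAl (by simp)
    · refine List.isChain_cons.mpr ⟨?_, hBc⟩
      intro y hy
      cases B with
      | nil => simp at hy
      | cons g B' =>
        simp only [List.head?_cons, Option.mem_def, Option.some.injEq] at hy
        rw [← hy]
        exact (hBh (by simp)).symm
  have hne : A ++ e :: f :: B ≠ [] := by simp
  refine ⟨⟨A ++ e :: f :: B, hne, hchain, ?_, ?_⟩, A, B, rfl⟩
  · cases A with
    | nil => exact hAe rfl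
    | cons g A' =>
      rw [List.head_append_of_ne_nil (by simp)]
      exact hAh (by simp)
  · rcases List.eq_nil_or_concat' B with hB | ⟨B', g, hB⟩
    · subst hB
      rw [getLast_eq_of_concat (show A ++ [e, f] = (A ++ [e]) ++ [f] by simp)]
      exact hBe rfl
    · subst hB
      rw [getLast_eq_of_concat
        (show A ++ e :: f :: (B' ++ [g]) = (A ++ e :: f :: B') ++ [g] by simp)]
      have := hBl (by simp)
      rwa [List.getLast_append] at this

/-- A route containing the crossing pattern with a smaller in-path and larger
out-path than some crossing route is not exceptional (first orientation). -/
lemma cross₁ {F : G.Framing} {R : G.Route} {a b : List G.E} {x y x' y' : G.E}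
    (hR : R.edges = a ++ x :: y :: b)
    (hadj : G.tgt x' = G.src y') (htgt : G.tgt x' = G.tgt x)
    (hxx : x ≠ x') (hyy : y' ≠ y)
    (hin : F.inlt x x') (hout : F.outlt y' y) :
    ¬ G.Exceptional F R := by
  intro hexc
  obtain ⟨S, c, d, hS⟩ := G.exists_route_pair x' y' hadj
  refine (hexc S).1 ⟨G.tgt x, a, y :: b, c, y' :: d, x, x',
    by simpa using hR, by simpa using hS, rfl, htgt, by simp, by simp,
    ⟨a, c, [], x, x', hxx, by simp, by simp, hin⟩,
    ⟨[], d, b, y', y, hyy, by simp, by simp, hout⟩⟩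

/-- Second orientation: the crossing route conflicts with `R`. -/
lemma cross₂ {F : G.Framing} {R : G.Route} {a b : List G.E} {x y x' y' : G.E}
    (hR : R.edges = a ++ x :: y :: b)
    (hadj : G.tgt x' = G.src y') (htgt : G.tgt x' = G.tgt x)
    (hxx : x' ≠ x) (hyy : y ≠ y')
    (hin : F.inlt x' x) (hout : F.outlt y y') :
    ¬ G.Exceptional F R := by
  intro hexc
  obtain ⟨S, c, d, hS⟩ := G.exists_route_pair x' y' hadj
  refine (hexc S).2 ⟨G.tgt x, c, y' :: d, a, y :: b, x', x,
    by simpa using hS, by simpa using hR, htgt, rfl, by simp, by simp,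
    ⟨c, a, [], x', x, hxx, by simp, by simp, hin⟩,
    ⟨[], b, d, y, y', hyy, by simp, by simp, hout⟩⟩

lemma exists_other_in (hfull : G.Full) {v : G.V} (hv : G.IsInner v)
    {e : G.E} (he : G.tgt e = v) : ∃ e', G.tgt e' = v ∧ e' ≠ e := by
  have h2 : G.indeg v = 2 := (hfull v hv).1
  have hlt : 1 < Fintype.card {f : G.E // G.tgt f = v} := by
    unfold indeg at h2; omega
  obtain ⟨x, y, hxy⟩ := Fintype.one_lt_card_iff.mp hlt
  by_cases hx : x.1 = e
  · exact ⟨y.1, y.2, fun h => hxy (Subtype.ext (hx ▸ h : y.1 = x.1)).symm⟩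
  · exact ⟨x.1, x.2, hx⟩

lemma exists_other_out (hfull : G.Full) {v : G.V} (hv : G.IsInner v)
    {e : G.E} (he : G.src e = v) : ∃ e', G.src e' = v ∧ e' ≠ e := by
  have h2 : G.outdeg v = 2 := (hfull v hv).2
  have hlt : 1 < Fintype.card {f : G.E // G.src f = v} := by
    unfold outdeg at h2; omega
  obtain ⟨x, y, hxy⟩ := Fintype.one_lt_card_iff.mp hlt
  by_cases hx : x.1 = e
  · exact ⟨y.1, y.2, fun h => hxy (Subtype.ext (hx ▸ h : y.1 = x.1)).symm⟩
  · exact ⟨x.1, x.2, hx⟩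

/-- Core of forward uniqueness: two exceptional routes leaving a common edge
cannot diverge. -/
lemma fwd_core {F : G.Framing} (hfull : G.Full) {R S : G.Route}
    (hR : G.Exceptional F R) (hS : G.Exceptional F S)
    {a b c d : List G.E} {e f g : G.E}
    (hRe : R.edges = a ++ e :: f :: b) (hSe : S.edges = c ++ e :: g :: d)
    (hfg : f ≠ g) (hofg : F.outlt f g) : False := by
  have hv1 : G.tgt e = G.src f := Route.adj hRe
  have hv2 : G.tgt e = G.src g := Route.adj hSe
  have hinner : G.IsInner (G.tgt e) := inner_of rfl hv1.symm
  obtain ⟨e', he't, he'ne⟩ := exists_other_in hfull hinner rfl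
  rcases F.inlt_total e e' he't.symm hinner (Ne.symm he'ne) with hie | hie
  · -- e is min-in; S uses (e, g) with g max-out: conflict with route (e', f)
    exact cross₁ hSe (he't.trans hv1) he't (Ne.symm he'ne) hfg hie hofg hS
  · -- e is max-in; R uses (e, f) with f min-out: conflict with route (e', g)
    exact cross₂ hRe (he't.trans hv2) he't he'ne hfg hie hofg hR

/-- Core of backward uniqueness. -/
lemma bwd_core {F : G.Framing} (hfull : G.Full) {R S : G.Route}
    (hR : G.Exceptional F R) (hS : G.Exceptional F S)
    {a b c d : List G.E} {e f g : G.E}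
    (hRe : R.edges = a ++ f :: e :: b) (hSe : S.edges = c ++ g :: e :: d)
    (hfg : f ≠ g) (hifg : F.inlt f g) : False := by
  have hv1 : G.tgt f = G.src e := Route.adj hRe
  have hv2 : G.tgt g = G.src e := Route.adj hSe
  have hinner : G.IsInner (G.src e) := inner_of hv1 rfl
  obtain ⟨e', he's, he'ne⟩ := exists_other_out hfull hinner rfl
  rcases F.outlt_total e e' he's.symm hinner (Ne.symm he'ne) with hoe | hoe
  · -- e min-out; S uses (g, e) with g max-in: conflict with route (f, e')
    exact cross₂ hSe (hv1.trans he's.symm) (hv1.trans hv2.symm) hfg (Ne.symm he'ne) hifg hoe hS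
  · -- e max-out; R uses (f, e): conflict with route (g, e')
    exact cross₁ hRe (hv2.trans he's.symm) (hv2.trans hv1.symm) hfg he'ne hifg hoe hR

lemma fwd_unique {F : G.Framing} (hfull : G.Full) {R S : G.Route}
    (hR : G.Exceptional F R) (hS : G.Exceptional F S)
    {a b c d : List G.E} {e f g : G.E}
    (hRe : R.edges = a ++ e :: f :: b) (hSe : S.edges = c ++ e :: g :: d) :
    f = g := by
  by_contra hfg
  have hv1 : G.tgt e = G.src f := Route.adj hRe
  have hv2 : G.tgt e = G.src g := Route.adj hSe
  have hinner : G.IsInner (G.src f) := inner_of hv1 rfl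
  rcases F.outlt_total f g (hv1.symm.trans hv2) hinner hfg with h | h
  · exact fwd_core hfull hR hS hRe hSe hfg h
  · exact fwd_core hfull hS hR hSe hRe (Ne.symm hfg) h

lemma bwd_unique {F : G.Framing} (hfull : G.Full) {R S : G.Route}
    (hR : G.Exceptional F R) (hS : G.Exceptional F S)
    {a b c d : List G.E} {e f g : G.E}
    (hRe : R.edges = a ++ f :: e :: b) (hSe : S.edges = c ++ g :: e :: d) :
    f = g := by
  by_contra hfg
  have hv1 : G.tgt f = G.src e := Route.adj hRe
  have hv2 : G.tgt g = G.src e := Route.adj hSe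
  have hinner : G.IsInner (G.tgt f) := inner_of rfl hv1.symm
  rcases F.inlt_total f g (hv1.trans hv2.symm) hinner hfg with h | h
  · exact bwd_core hfull hR hS hRe hSe hfg h
  · exact bwd_core hfull hS hR hSe hRe (Ne.symm hfg) h

lemma suffix_eq {F : G.Framing} (hfull : G.Full) {R S : G.Route}
    (hR : G.Exceptional F R) (hS : G.Exceptional F S) :
    ∀ (b : List G.E) (e : G.E) (a c d : List G.E),
      R.edges = a ++ e :: b → S.edges = c ++ e :: d → b = d := by
  intro b
  induction b with
  | nil =>
    intro e a c d hRe hSe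
    have hsink : G.IsSink (G.tgt e) := Route.sink_of_eq hRe
    cases d with
    | nil => rfl
    | cons g d' =>
      exact absurd (Route.adj hSe).symm (hsink g)
  | cons f b' ih =>
    intro e a c d hRe hSe
    have hv : G.tgt e = G.src f := Route.adj hRe
    cases d with
    | nil =>
      exact absurd hv.symm (Route.sink_of_eq hSe f)
    | cons g d' =>
      have hfg : f = g := fwd_unique hfull hR hS hRe hSe
      subst hfg
      have h1 : R.edges = (a ++ [e]) ++ f :: b' := by simpa using hRe
      have h2 : S.edges = (c ++ [e]) ++ f :: d' := by simpa using hSe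
      rw [ih f (a ++ [e]) (c ++ [e]) d' h1 h2]

lemma prefix_eq {F : G.Framing} (hfull : G.Full) {R S : G.Route}
    (hR : G.Exceptional F R) (hS : G.Exceptional F S) :
    ∀ (n : ℕ) (a : List G.E), a.length = n → ∀ (e : G.E) (b c d : List G.E),
      R.edges = a ++ e :: b → S.edges = c ++ e :: d → a = c := by
  intro n
  induction n with
  | zero =>
    intro a ha e b c d hRe hSe
    rw [List.length_eq_zero_iff] at ha
    subst ha
    have hsrc : G.IsSource (G.src e) := Route.source_of_eq hRe
    rcases List.eq_nil_or_concat c with hc | ⟨c', q, hc⟩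
    · exact hc.symm
    · subst hc
      have : S.edges = c' ++ q :: e :: d := by simpa using hSe
      exact absurd (Route.adj this) (hsrc q)
  | succ n ihn =>
    intro a ha e b c d hRe hSe
    rcases List.eq_nil_or_concat a with hc | ⟨a', p, hap⟩
    · subst hc; simp at ha
    · subst hap
      have hRe' : R.edges = a' ++ p :: e :: b := by simpa using hRe
      have hv : G.tgt p = G.src e := Route.adj hRe'
      rcases List.eq_nil_or_concat c with hc | ⟨c', q, hcq⟩
      · subst hc
        exact absurd hv ((Route.source_of_eq hSe) p)
      · subst hcq
        have hSe' : S.edges = c' ++ q :: e :: d := by simpa using hSe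
        have hpq : p = q := bwd_unique hfull hR hS hRe' hSe'
        subst hpq
        have hlen : a'.length = n := by
          simpa using ha
        rw [ihn a' hlen p (e :: b) c' (e :: d) hRe' hSe']

lemma exceptional_unique {F : G.Framing} (hfull : G.Full) {R S : G.Route}
    (hR : G.Exceptional F R) (hS : G.Exceptional F S) {e : G.E}
    (heR : e ∈ R.edges) (heS : e ∈ S.edges) : R = S := by
  obtain ⟨a, b, hRe⟩ := List.append_of_mem heR
  obtain ⟨c, d, hSe⟩ := List.append_of_mem heS
  apply Route.ext'
  rw [hRe, hSe, prefix_eq hfull hR hS a.length a rfl e b c d hRe hSe,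
    suffix_eq hfull hR hS b e a c d hRe hSe]

lemma not_idle (hfull : G.Full) (e : G.E) : ¬ G.Idle e := by
  rintro (⟨hin, huniq⟩ | ⟨hin, huniq⟩)
  · have h2 : G.indeg (G.tgt e) = 2 := (hfull _ hin).1
    have hle : Fintype.card {f : G.E // G.tgt f = G.tgt e} ≤ 1 :=
      Fintype.card_le_one_iff.mpr
        (fun x y => Subtype.ext ((huniq x x.2).trans (huniq y y.2).symm))
    unfold indeg at h2; omega
  · have h2 : G.outdeg (G.src e) = 2 := (hfull _ hin).2
    have hle : Fintype.card {f : G.E // G.src f = G.src e} ≤ 1 :=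
      Fintype.card_le_one_iff.mpr
        (fun x y => Subtype.ext ((huniq x x.2).trans (huniq y y.2).symm))
    unfold outdeg at h2; omega

end DAG

/-- In a full DAG with an ample framing, every edge lies on
exactly one exceptional route. -/
theorem unique_exceptional_route (G : DAG) (F : G.Framing)
    (hfull : G.Full) (hample : G.Ample F) (e : G.E) :
    ∃! R : G.Route, G.Exceptional F R ∧ e ∈ R.edges := by
  obtain ⟨R, hR, heR⟩ := hample e (DAG.not_idle hfull e)
  refine ⟨R, ⟨hR, heR⟩, ?_⟩
  rintro S ⟨hS, heS⟩
  exact DAG.exceptional_unique hfull hS hR heS heR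
end

section
/- Every full DAG admits a decomposition of its edge set into edge-disjoint subgraphs, each of which is either (i) a cycle of even length whose edges alternate in direction, (ii) a path whose edges alternate in direction and whose endpoints are sources or sinks of G, or (iii) a single edge from a source to a sink. -/
namespace DAG

variable (G : DAG)

/-- `AltChain b l`: consecutive edges of `l` alternately share their heads and
their tails, the first pair sharing heads when `b = true` and tails when
`b = false`. -/
def AltChain : Bool → List G.E → Prop
  | _, [] => True
  | _, [_] => True
  | b, e :: f :: l =>
      (if b then G.tgt e = G.tgt f else G.src e = G.src f) ∧
        AltChain (!b) (f :: l)

/-- A vertex that is a source or a sink. -/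
def SourceOrSink (v : G.V) : Prop := G.IsSource v ∨ G.IsSink v

/-- An even cycle whose edges alternate in direction: an even-length list of
pairwise distinct edges which alternately share heads and tails, closing up
cyclically. -/
def IsAltCycle (l : List G.E) : Prop :=
  l.Nodup ∧ 2 ≤ l.length ∧ Even l.length ∧
    ∃ (b : Bool) (e : G.E), l.head? = some e ∧ G.AltChain b (l ++ [e])

/-- A path (with at least two edges) whose edges alternate in direction and
whose two endpoints are sources or sinks of `G`. -/
def IsAltPath (l : List G.E) : Prop :=
  l.Nodup ∧ 2 ≤ l.length ∧
    ∃ b : Bool, G.AltChain b l ∧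
      (∀ e : G.E, l.head? = some e →
        G.SourceOrSink (if b then G.src e else G.tgt e)) ∧
      (∀ e : G.E, l.getLast? = some e →
        G.SourceOrSink
          (if xor b (decide ((l.length - 2) % 2 = 1)) then G.src e
           else G.tgt e))

/-- A single edge from a source directly to a sink. -/
def IsSourceSinkEdge (l : List G.E) : Prop :=
  ∃ e : G.E, l = [e] ∧ G.IsSource (G.src e) ∧ G.IsSink (G.tgt e)

/-- A decomposition of the edge set of `G` into edge-disjoint alternating even
cycles, alternating source/sink paths, and source-to-sink edges. -/
def IsDecomposition (C : List (List G.E)) : Prop :=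
  C.flatten.Nodup ∧ (∀ e : G.E, e ∈ C.flatten) ∧
    ∀ l ∈ C, G.IsAltCycle l ∨ G.IsAltPath l ∨ G.IsSourceSinkEdge l

/-- A component of a decomposition contains an inner vertex. -/
def hasInner (l : List G.E) : Bool :=
  l.any fun e => decide (G.IsInner (G.src e)) || decide (G.IsInner (G.tgt e))

end DAG

/-! ### Auxiliary development for the decomposition theorem -/

namespace DAGAux

open DAG

variable {G : DAG}

/-- `Rel b e f` : `f` is a partner of `e` at an inner vertex, sharing heads
(`b = true`) or tails (`b = false`). -/
def Rel (G : DAG) (b : Bool) (e f : G.E) : Prop :=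
  f ≠ e ∧ (if b then G.tgt f = G.tgt e ∧ G.IsInner (G.tgt e)
           else G.src f = G.src e ∧ G.IsInner (G.src e))

theorem rel_symm {b : Bool} {e f : G.E} (h : Rel G b e f) : Rel G b f e := by
  obtain ⟨hne, h2⟩ := h
  cases b with
  | true =>
    simp only [if_true] at h2 ⊢
    exact ⟨hne.symm, h2.1.symm, h2.1 ▸ h2.2⟩
  | false =>
    simp only [if_false, Bool.false_eq_true] at h2 ⊢
    exact ⟨hne.symm, h2.1.symm, h2.1 ▸ h2.2⟩

theorem three_distinct_card_two {α : Type*} [Fintype α] [DecidableEq α]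
    (h : Fintype.card α = 2) (a b c : α) (hab : a ≠ b) (hac : a ≠ c) : b = c := by
  by_contra hbc
  have hsub : ({a, b, c} : Finset α).card ≤ 2 := by
    rw [← h, ← Finset.card_univ]
    exact Finset.card_le_card (Finset.subset_univ _)
  have : ({a, b, c} : Finset α).card = 3 := by
    rw [Finset.card_insert_of_notMem (by simp [hab, hac]),
      Finset.card_insert_of_notMem (by simp [hbc]), Finset.card_singleton]
  omega

theorem rel_unique (hfull : G.Full) {b : Bool} {e f f' : G.E}
    (h : Rel G b e f) (h' : Rel G b e f') : f = f' := by
  cases b with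
  | true =>
    obtain ⟨hne, ht, hi⟩ := h
    obtain ⟨hne', ht', _⟩ := h'
    have hc : Fintype.card {g : G.E // G.tgt g = G.tgt e} = 2 := (hfull _ hi).1
    have := three_distinct_card_two hc ⟨e, rfl⟩ ⟨f, ht⟩ ⟨f', ht'⟩
      (fun hh => hne (congrArg Subtype.val hh).symm)
      (fun hh => hne' (congrArg Subtype.val hh).symm)
    exact congrArg Subtype.val this
  | false =>
    obtain ⟨hne, ht, hi⟩ := h
    obtain ⟨hne', ht', _⟩ := h'
    have hc : Fintype.card {g : G.E // G.src g = G.src e} = 2 := (hfull _ hi).2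
    have := three_distinct_card_two hc ⟨e, rfl⟩ ⟨f, ht⟩ ⟨f', ht'⟩
      (fun hh => hne (congrArg Subtype.val hh).symm)
      (fun hh => hne' (congrArg Subtype.val hh).symm)
    exact congrArg Subtype.val this

theorem rel_exists_true (hfull : G.Full) {e : G.E} (hi : G.IsInner (G.tgt e)) :
    ∃ f, Rel G true e f := by
  have hc : Fintype.card {g : G.E // G.tgt g = G.tgt e} = 2 := (hfull _ hi).1
  obtain ⟨⟨f, hf⟩, hne⟩ := Fintype.exists_ne_of_one_lt_card (by omega) (⟨e, rfl⟩ :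
    {g : G.E // G.tgt g = G.tgt e})
  exact ⟨f, fun hh => hne (Subtype.ext hh), by simp [hf, hi]⟩

theorem rel_exists_false (hfull : G.Full) {e : G.E} (hi : G.IsInner (G.src e)) :
    ∃ f, Rel G false e f := by
  have hc : Fintype.card {g : G.E // G.src g = G.src e} = 2 := (hfull _ hi).2
  obtain ⟨⟨f, hf⟩, hne⟩ := Fintype.exists_ne_of_one_lt_card (by omega) (⟨e, rfl⟩ :
    {g : G.E // G.src g = G.src e})
  exact ⟨f, fun hh => hne (Subtype.ext hh), by simp [hf, hi]⟩

open Classical in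
/-- The partner of `e` at its head (`b = true`) or tail (`b = false`), if any. -/
noncomputable def stp (G : DAG) (b : Bool) (e : G.E) : Option G.E :=
  if h : ∃ f, Rel G b e f then some h.choose else none

theorem stp_some_of_rel (hfull : G.Full) {b : Bool} {e f : G.E} (h : Rel G b e f) :
    stp G b e = some f := by
  classical
  rw [stp, dif_pos ⟨f, h⟩]
  exact congrArg some (rel_unique hfull (Exists.choose_spec ⟨f, h⟩) h)

theorem rel_of_stp_some {b : Bool} {e f : G.E} (h : stp G b e = some f) :
    Rel G b e f := by
  classical
  rw [stp] at h
  split at h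
  · exact (Option.some_inj.mp h) ▸ Exists.choose_spec ‹_›
  · exact absurd h (by simp)

theorem stp_symm (hfull : G.Full) {b : Bool} {e f : G.E} (h : stp G b e = some f) :
    stp G b f = some e :=
  stp_some_of_rel hfull (rel_symm (rel_of_stp_some h))

theorem stp_ne {b : Bool} {e f : G.E} (h : stp G b e = some f) : f ≠ e :=
  (rel_of_stp_some h).1

theorem stp_fun {b : Bool} {e f f' : G.E} (hfull : G.Full)
    (h : stp G b e = some f) (h' : stp G b e = some f') : f = f' := by
  rw [h] at h'; exact Option.some_inj.mp h'

theorem stp_true_none_iff (hfull : G.Full) {e : G.E} :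
    stp G true e = none ↔ ¬ G.IsInner (G.tgt e) := by
  classical
  rw [stp]
  constructor
  · intro h hi
    obtain ⟨f, hf⟩ := rel_exists_true hfull hi
    rw [dif_pos ⟨f, hf⟩] at h
    exact absurd h (by simp)
  · intro hi
    rw [dif_neg]
    rintro ⟨f, -, h2⟩
    simp only [if_true] at h2
    exact hi h2.2

theorem stp_false_none_iff (hfull : G.Full) {e : G.E} :
    stp G false e = none ↔ ¬ G.IsInner (G.src e) := by
  classical
  rw [stp]
  constructor
  · intro h hi
    obtain ⟨f, hf⟩ := rel_exists_false hfull hi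
    rw [dif_pos ⟨f, hf⟩] at h
    exact absurd h (by simp)
  · intro hi
    rw [dif_neg]
    rintro ⟨f, -, h2⟩
    simp only [Bool.false_eq_true, if_false] at h2
    exact hi h2.2

/-- The alternating walk with fuel `n`, current mode `b`, current edge `e` and
visited list `vis`. -/
noncomputable def walkV (G : DAG) : ℕ → Bool → G.E → List G.E → List G.E
  | 0, _, e, _ => [e]
  | n+1, b, e, vis =>
    match stp G b e with
    | none => [e]
    | some f => if f ∈ e :: vis then [e] else e :: walkV G n (!b) f (e :: vis)

/-- `Hist b e vis` : `vis` is the reversed history of an alternating walk ending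
at `e`, whose next step uses mode `b`. -/
def Hist (G : DAG) : Bool → G.E → List G.E → Prop
  | _, _, [] => True
  | b, e, f :: vis => stp G (!b) e = some f ∧ Hist G (!b) f vis

@[simp] theorem hist_nil {b : Bool} {e : G.E} : Hist G b e [] := trivial

theorem hist_cons {b : Bool} {e f : G.E} {vis : List G.E} :
    Hist G b e (f :: vis) ↔ stp G (!b) e = some f ∧ Hist G (!b) f vis := Iff.rfl

theorem xor_parity (b : Bool) (k : ℕ) :
    xor (!b) (decide (k % 2 = 1)) = xor b (decide ((k+1) % 2 = 1)) := by
  rcases Nat.mod_two_eq_zero_or_one k with h | h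
  · have h2 : (k+1) % 2 = 1 := by omega
    simp [h, h2]
  · have h2 : (k+1) % 2 = 0 := by omega
    simp [h, h2]

theorem selector_eq (b : Bool) {n : ℕ} (h : 2 ≤ n) :
    xor b (decide ((n-2) % 2 = 1)) = !(xor b (decide ((n-1) % 2 = 1))) := by
  rcases Nat.mod_two_eq_zero_or_one (n-2) with h1 | h1
  · have h2 : (n-1) % 2 = 1 := by omega
    simp [h1, h2]
  · have h2 : (n-1) % 2 = 0 := by omega
    simp [h1, h2]

/-- Interior elements of a walk history have all their partners inside the walk. -/
theorem histB (hfull : G.Full) : ∀ (vis : List G.E) (b : Bool) (e : G.E),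
    Hist G b e vis → (e :: vis).Nodup → ∀ x ∈ vis, vis.getLast? ≠ some x →
    ∀ m z, stp G m x = some z → z ∈ e :: vis ∧ (z = e → vis.head? = some x) := by
  intro vis
  induction vis with
  | nil => intro _ _ _ _ x hx; simp at hx
  | cons g vis' ih =>
    intro b e hH hnd x hx hlast m z hz
    rw [hist_cons] at hH
    obtain ⟨hga, hH'⟩ := hH
    rcases List.mem_cons.mp hx with rfl | hx'
    · -- x = g, the element just before `e`.
      rcases vis' with _ | ⟨h, vis''⟩
      · simp at hlast
      · rw [hist_cons] at hH'
        obtain ⟨hgh, -⟩ := hH'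
        rw [Bool.not_not] at hgh
        have hge : stp G (!b) x = some e := stp_symm hfull hga
        have hm : m = b ∨ m = !b := by cases m <;> cases b <;> simp
        refine ⟨?_, fun _ => rfl⟩
        rcases hm with rfl | rfl
        · rw [hgh] at hz; cases hz; simp
        · rw [hge] at hz; cases hz; simp
    · -- x lies deeper in the history.
      rcases vis' with _ | ⟨h, vis''⟩
      · simp at hx'
      · have hlast' : (h :: vis'').getLast? ≠ some x := by
          rwa [List.getLast?_cons_cons] at hlast
        have hnd' : (g :: h :: vis'').Nodup := (List.nodup_cons.mp hnd).2
        obtain ⟨hzmem, hze⟩ := ih (!b) g hH' hnd' x hx' hlast' m z hz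
        refine ⟨List.mem_cons_of_mem _ hzmem, fun hzeq => ?_⟩
        exact absurd (hzeq ▸ hzmem) (List.nodup_cons.mp hnd).1

/-- The oldest element of a (long enough) history has a partner inside the
history, at the appropriate alternating mode. -/
theorem histC (hfull : G.Full) : ∀ (vis : List G.E) (b : Bool) (e : G.E),
    Hist G b e vis → 2 ≤ vis.length → ∀ x, vis.getLast? = some x →
    ∃ w ∈ vis, stp G (xor b (decide (vis.length % 2 = 1))) x = some w := by
  intro vis
  induction vis with
  | nil => intro _ _ _ h; simp at h
  | cons g vis' ih =>
    intro b e hH hlen x hx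
    rw [hist_cons] at hH
    obtain ⟨hga, hH'⟩ := hH
    rcases vis' with _ | ⟨h, vis''⟩
    · simp at hlen
    · rcases vis'' with _ | ⟨k, vis'''⟩
      · -- vis = [g, h]
        rw [hist_cons] at hH'
        obtain ⟨hgh, -⟩ := hH'
        rw [Bool.not_not] at hgh
        obtain rfl : h = x := by simpa using hx
        refine ⟨g, by simp, ?_⟩
        simpa using stp_symm hfull hgh
      · -- vis has length ≥ 3; recurse.
        have hx' : (h :: k :: vis''').getLast? = some x := by
          rwa [List.getLast?_cons_cons] at hx
        obtain ⟨w, hw, hsw⟩ := ih (!b) g hH' (by simp) x hx'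
        refine ⟨w, List.mem_cons_of_mem _ hw, ?_⟩
        rwa [xor_parity (b := b) (k := (h :: k :: vis''').length)] at hsw

/-- If the walk closes up, it closes onto its very first edge, and the total
length is even. -/
theorem histA (hfull : G.Full) : ∀ (vis : List G.E) (b : Bool) (e f : G.E),
    Hist G b e vis → (e :: vis).Nodup → stp G b e = some f → f ∈ e :: vis →
    (e :: vis).getLast? = some f ∧ (e :: vis).length % 2 = 0 := by
  intro vis b e f hH hnd hs hf
  have hfe : f ≠ e := stp_ne hs
  have hfv : f ∈ vis := by rcases List.mem_cons.mp hf with rfl | h; exact absurd rfl hfe; exact h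
  rcases vis with _ | ⟨g, vis'⟩
  · simp at hfv
  obtain ⟨hga, hH'⟩ := hist_cons.mp hH
  have henv : e ∉ g :: vis' := (List.nodup_cons.mp hnd).1
  by_cases hfg : f = g
  · subst hfg
    rcases vis' with _ | ⟨h, vis''⟩
    · simp
    · rw [hist_cons] at hH'
      obtain ⟨hgh, -⟩ := hH'
      rw [Bool.not_not] at hgh
      have : stp G b f = some e := stp_symm hfull hs
      rw [hgh] at this
      cases this
      exact absurd (by simp) henv
  · have hfv' : f ∈ vis' := by
      rcases List.mem_cons.mp hfv with rfl | h; exact absurd rfl hfg; exact h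
    have hvne : vis' ≠ [] := by rintro rfl; simp at hfv'
    have hsfe : stp G b f = some e := stp_symm hfull hs
    by_cases hlast : (g :: vis').getLast? = some f
    · -- f is the oldest element: the walk closes up.
      constructor
      · rcases vis' with _ | ⟨h, vis''⟩; exact absurd rfl hvne
        rwa [List.getLast?_cons_cons]
      · have hlen2 : 2 ≤ (g :: vis').length := by
          rcases vis' with _ | _; exact absurd rfl hvne; simp
        obtain ⟨w, hw, hsw⟩ := histC hfull (g :: vis') b e hH hlen2 f hlast
        -- `stp` at mode `xor b (parity)` sends f to w ∈ vis; at mode b it sends f to e.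
        by_cases hpar : ((g :: vis').length % 2 = 1)
        · simp only [List.length_cons] at hpar ⊢; omega
        · have hne : ¬ ((vis'.length + 1) % 2 = 1) := by simpa using hpar
          have : xor b (decide ((g :: vis').length % 2 = 1)) = b := by
            simp [hne]
          rw [this, hsfe] at hsw
          cases hsw
          exact absurd hw henv
    · obtain ⟨-, hhead⟩ := histB hfull (g :: vis') b e hH hnd f hfv hlast b e hsfe
      have : g = f := by simpa using hhead rfl
      exact absurd this.symm hfg

theorem rel_altrel {b : Bool} {e f : G.E} (h : Rel G b e f) :
    (if b then G.tgt e = G.tgt f else G.src e = G.src f) := by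
  obtain ⟨-, h2⟩ := h
  cases b
  · simp only [Bool.false_eq_true, if_false] at h2 ⊢
    exact h2.1.symm
  · simp only [if_true] at h2 ⊢
    exact h2.1.symm

theorem altChain_cons_cons {b : Bool} {e f : G.E} {l : List G.E} :
    G.AltChain b (e :: f :: l) ↔
      ((if b then G.tgt e = G.tgt f else G.src e = G.src f) ∧
        G.AltChain (!b) (f :: l)) := Iff.rfl

theorem altChain_append (x : G.E) : ∀ (l : List G.E) (b : Bool), G.AltChain b l →
    ∀ z, l.getLast? = some z →
    (if xor b (decide ((l.length - 1) % 2 = 1)) then G.tgt z = G.tgt x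
     else G.src z = G.src x) →
    G.AltChain b (l ++ [x]) := by
  intro l
  induction l with
  | nil => intro b _ z hz; simp at hz
  | cons a l' ih =>
    intro b hc z hz hrel
    rcases l' with _ | ⟨a', l''⟩
    · have hza : a = z := by simpa using hz
      rw [show ([a] ++ [x]) = [a, x] from rfl, altChain_cons_cons]
      refine ⟨?_, trivial⟩
      rw [hza]
      simpa using hrel
    · rw [altChain_cons_cons] at hc
      rw [show ((a :: a' :: l'') ++ [x]) = a :: ((a' :: l'') ++ [x]) from rfl,
        show ((a' :: l'') ++ [x]) = a' :: (l'' ++ [x]) from rfl, altChain_cons_cons]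
      refine ⟨hc.1, ?_⟩
      rw [show (a' :: (l'' ++ [x])) = (a' :: l'') ++ [x] from rfl]
      refine ih (!b) hc.2 z (by rwa [List.getLast?_cons_cons] at hz) ?_
      have hm : xor (!b) (decide (((a' :: l'').length - 1) % 2 = 1))
          = xor b (decide (((a :: a' :: l'').length - 1) % 2 = 1)) := by
        have h1 : (a :: a' :: l'').length - 1 = ((a' :: l'').length - 1) + 1 := by simp
        rw [h1]; exact xor_parity b ((a' :: l'').length - 1)
      rwa [hm]

/-- The full specification of a walk. -/
def WSpec (G : DAG) (b : Bool) (e : G.E) (vis l : List G.E) : Prop :=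
  l ≠ [] ∧ l.head? = some e ∧ l.Nodup ∧ (∀ x ∈ l, x ∉ vis) ∧ G.AltChain b l ∧
  (∀ P : G.E → Prop, P e → (∀ y x m, P y → stp G m y = some x → P x) →
    ∀ x ∈ l, P x) ∧
  ∃ z h', l.reverse = z :: h' ∧
    Hist G (xor b (decide ((l.length - 1) % 2 = 1))) z (h' ++ vis) ∧
    (stp G (xor b (decide ((l.length - 1) % 2 = 1))) z = none ∨
     ∃ f, stp G (xor b (decide ((l.length - 1) % 2 = 1))) z = some f ∧
       f ∈ z :: (h' ++ vis))

theorem wspec_single {b : Bool} {e : G.E} {vis : List G.E} (hH : Hist G b e vis)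
    (hnd : (e :: vis).Nodup)
    (hstop : stp G b e = none ∨ ∃ f, stp G b e = some f ∧ f ∈ e :: vis) :
    WSpec G b e vis [e] := by
  refine ⟨by simp, rfl, by simp, ?_, trivial, ?_, e, [], rfl, ?_, ?_⟩
  · intro x hx
    obtain rfl : x = e := by simpa using hx
    exact (List.nodup_cons.mp hnd).1
  · intro P hPe _ x hx
    obtain rfl : x = e := by simpa using hx
    exact hPe
  · simpa using hH
  · simpa using hstop

theorem walkV_spec (hfull : G.Full) : ∀ (n : ℕ) (b : Bool) (e : G.E)
    (vis : List G.E), Hist G b e vis → (e :: vis).Nodup →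
    Fintype.card G.E ≤ n + (e :: vis).length →
    WSpec G b e vis (walkV G n b e vis) := by
  intro n
  induction n with
  | zero =>
    intro b e vis hH hnd hcard
    have hall : ∀ x : G.E, x ∈ e :: vis := by
      intro x
      have h1 : (e :: vis).length ≤ Fintype.card G.E := hnd.length_le_card
      have h2 : (e :: vis).toFinset = Finset.univ := by
        apply Finset.eq_univ_of_card
        rw [List.toFinset_card_of_nodup hnd]
        simp only [List.length_cons] at hcard h1 ⊢
        omega
      have := Finset.mem_univ x
      rw [← h2, List.mem_toFinset] at this
      exact this
    show WSpec G b e vis [e]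
    refine wspec_single hH hnd ?_
    rcases hs : stp G b e with _ | f
    · exact Or.inl rfl
    · exact Or.inr ⟨f, rfl, hall f⟩
  | succ n ih =>
    intro b e vis hH hnd hcard
    rcases hs : stp G b e with _ | f
    · have heq : walkV G (n+1) b e vis = [e] := by simp [walkV, hs]
      rw [heq]
      exact wspec_single hH hnd (Or.inl hs)
    · by_cases hf : f ∈ e :: vis
      · have heq : walkV G (n+1) b e vis = [e] := by simp [walkV, hs, hf]
        rw [heq]
        exact wspec_single hH hnd (Or.inr ⟨f, hs, hf⟩)
      · have heq : walkV G (n+1) b e vis = e :: walkV G n (!b) f (e :: vis) := by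
          simp [walkV, hs, hf]
        have hH' : Hist G (!b) f (e :: vis) := by
          rw [hist_cons, Bool.not_not]
          exact ⟨stp_symm hfull hs, hH⟩
        have hnd' : (f :: e :: vis).Nodup := List.nodup_cons.mpr ⟨hf, hnd⟩
        have hcard' : Fintype.card G.E ≤ n + (f :: e :: vis).length := by
          simp at hcard ⊢; omega
        obtain ⟨hne', hhd', hnd'', hnv', hAC', hP', z, h'', hrev', hHz, hstop⟩ :=
          ih (!b) f (e :: vis) hH' hnd' hcard'
        rw [heq]
        set l' := walkV G n (!b) f (e :: vis) with hl'
        have hmode : xor (!b) (decide ((l'.length - 1) % 2 = 1))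
            = xor b (decide (((e :: l').length - 1) % 2 = 1)) := by
          have h1 : (e :: l').length - 1 = (l'.length - 1) + 1 := by
            rcases l' with _ | _
            · exact absurd rfl hne'
            · simp
          rw [h1]; exact xor_parity b (l'.length - 1)
        refine ⟨by simp, rfl, ?_, ?_, ?_, ?_, z, h'' ++ [e], ?_, ?_, ?_⟩
        · exact List.nodup_cons.mpr ⟨fun hmem => (hnv' e hmem) (by simp), hnd''⟩
        · intro x hx
          rcases List.mem_cons.mp hx with rfl | hx'
          · exact (List.nodup_cons.mp hnd).1
          · exact fun hxv => (hnv' x hx') (List.mem_cons_of_mem _ hxv)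
        · rcases hl : l' with _ | ⟨f', t⟩
          · exact absurd hl hne'
          · rw [altChain_cons_cons]
            refine ⟨?_, by rw [hl] at hAC'; exact hAC'⟩
            have hff : f' = f := by rw [hl] at hhd'; simpa using hhd'
            rw [hff]
            exact rel_altrel (rel_of_stp_some hs)
        · intro P hPe hstep x hx
          rcases List.mem_cons.mp hx with rfl | hx'
          · exact hPe
          · exact hP' P (hstep e f b hPe hs) hstep x hx'
        · rw [List.reverse_cons, hrev']; rfl
        · rw [← hmode]
          have : (h'' ++ [e]) ++ vis = h'' ++ (e :: vis) := by simp
          rw [this]; exact hHz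
        · rw [← hmode]
          have : z :: ((h'' ++ [e]) ++ vis) = z :: (h'' ++ (e :: vis)) := by simp
          rw [this]; exact hstop

/-- A set of edges closed under taking partners. -/
def Closed (G : DAG) (s : Finset G.E) : Prop :=
  ∀ x ∈ s, ∀ (m : Bool) (f : G.E), stp G m x = some f → f ∈ s

theorem not_inner_sos {v : G.V} (h : ¬ G.IsInner v) : G.SourceOrSink v := by
  by_contra hc
  rw [DAG.SourceOrSink] at hc
  push_neg at hc
  exact h ⟨hc.1, hc.2⟩

theorem mode_cases (m c : Bool) : m = c ∨ m = !c := by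
  cases m <;> cases c <;> simp

theorem xor_twice (a c : Bool) : xor (xor a c) c = a := by cases a <;> cases c <;> rfl

theorem comp_spec (hfull : G.Full) {used : Finset G.E} (hcl : Closed G used)
    {e : G.E} (he : e ∉ used) (b : Bool)
    (hcond : stp G (!b) e = none ∨ ∀ x, x ∉ used → ∀ m, stp G m x ≠ none) :
    ∃ l : List G.E, walkV G (Fintype.card G.E) b e [] = l ∧ e ∈ l ∧ l.Nodup ∧
      (∀ x ∈ l, x ∉ used) ∧ (∀ x ∈ l, ∀ m w, stp G m x = some w → w ∈ l) ∧
      (G.IsAltCycle l ∨ G.IsAltPath l ∨ G.IsSourceSinkEdge l) := by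
  have hw := walkV_spec hfull (Fintype.card G.E) b e [] trivial (by simp) (by simp)
  obtain ⟨l, hleq⟩ : ∃ l, walkV G (Fintype.card G.E) b e [] = l := ⟨_, rfl⟩
  rw [hleq] at hw
  obtain ⟨hne, hhd, hndl, -, hAC, hP, z, h', hrev, hHz, hstop⟩ := hw
  simp only [List.append_nil] at hHz hstop
  -- basic facts about the walk
  have hel : e ∈ l := by
    rcases l with _ | ⟨a, t⟩
    · exact absurd rfl hne
    · obtain rfl : a = e := by simpa using hhd
      simp
  have hmem : ∀ x, x ∈ l ↔ x ∈ z :: h' := by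
    intro x; rw [← hrev, List.mem_reverse]
  have hndzh : (z :: h').Nodup := by rw [← hrev]; exact (List.nodup_reverse).mpr hndl
  have hlen : h'.length + 1 = l.length := by
    have := congrArg List.length hrev
    simpa using this.symm
  have hlast : (z :: h').getLast? = some e := by
    rw [← hrev, List.getLast?_reverse]; exact hhd
  have hzl : l.getLast? = some z := by
    rw [← List.head?_reverse, hrev]; rfl
  have hzel : z ∈ l := (hmem z).mpr (by simp)
  have hunused : ∀ x ∈ l, x ∉ used := by
    refine hP (fun x => x ∉ used) he ?_
    intro y x m hy hs hxused
    exact hy (hcl x hxused m y (stp_symm hfull hs))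
  set b' := xor b (decide ((l.length - 1) % 2 = 1)) with hb'def
  rcases hstop with hstopn | ⟨f, hsf, hfmem⟩
  · -- the walk stopped at a boundary: a path or a single edge
    have hstart : stp G (!b) e = none := by
      rcases hcond with h | hguar
      · exact h
      · exact absurd hstopn (hguar z (hunused z hzel) b')
    by_cases hlen1 : l.length = 1
    · -- single source-to-sink edge
      have hl1 : l = [e] := by
        rcases l with _ | ⟨a, t⟩
        · exact absurd rfl hne
        · obtain rfl : a = e := by simpa using hhd
          have ht : t = [] := by
            have : t.length = 0 := by simpa using hlen1
            simpa using this
          rw [ht]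
      have hze : e = z := by
        rw [hl1] at hzl; simpa using hzl
      have hb'b : b' = b := by
        rw [hb'def, hlen1]; simp
      have hbnone : stp G b e = none := by rw [← hb'b, hze]; exact hstopn
      have hboth : stp G true e = none ∧ stp G false e = none := by
        cases b
        · exact ⟨by simpa using hstart, hbnone⟩
        · exact ⟨hbnone, by simpa using hstart⟩
      refine ⟨l, hleq, hel, hndl, hunused, ?_, ?_⟩
      · intro x hx m w hw
        rw [hl1] at hx
        obtain rfl : x = e := by simpa using hx
        cases m
        · rw [hboth.2] at hw; cases hw
        · rw [hboth.1] at hw; cases hw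
      · refine Or.inr (Or.inr ⟨e, hl1, ?_, ?_⟩)
        · rcases not_inner_sos ((stp_false_none_iff hfull).mp hboth.2) with h | h
          · exact h
          · exact absurd rfl (h e)
        · rcases not_inner_sos ((stp_true_none_iff hfull).mp hboth.1) with h | h
          · exact absurd rfl (h e)
          · exact h
    · -- alternating path with at least two edges
      have hlen2 : 2 ≤ l.length := by
        have := List.length_pos_iff.mpr hne; omega
      have hh'ne : h' ≠ [] := by
        intro hcon; rw [hcon] at hlen; simp at hlen; omega
      refine ⟨l, hleq, hel, hndl, hunused, ?_, ?_⟩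
      · -- closure
        intro x hx m w hw
        rw [hmem] at hx
        rw [hmem]
        rcases List.mem_cons.mp hx with rfl | hxh
        · rcases mode_cases m b' with hm | hm
          · rw [hm, hstopn] at hw; cases hw
          · rcases h' with _ | ⟨g, t⟩
            · exact absurd rfl hh'ne
            · obtain ⟨hzg, -⟩ := hist_cons.mp hHz
              rw [hm, hzg] at hw; cases hw; simp
        · by_cases hxl : h'.getLast? = some x
          · have hxe : x = e := by
              have hx2 : (z :: h').getLast? = some x := by
                rcases h' with _ | ⟨g, t⟩
                · exact absurd rfl hh'ne
                · rw [List.getLast?_cons_cons]; exact hxl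
              rw [hx2] at hlast; simpa using hlast
            rw [hxe] at hw hxl
            rcases mode_cases m b with hm | hm
            · rw [hm] at hw
              rcases Nat.lt_or_ge h'.length 2 with hsmall | hbig
              · obtain ⟨g, rfl⟩ : ∃ g, h' = [g] := by
                  rcases h' with _ | ⟨g, t⟩
                  · exact absurd rfl hh'ne
                  · rcases t with _ | ⟨u, t'⟩
                    · exact ⟨g, rfl⟩
                    · simp only [List.length_cons] at hsmall; omega
                have hge : g = e := by simpa using hxl
                rw [hge] at hHz
                have hll : l.length = 2 := by simp at hlen; omega
                have hb'eq : b' = !b := by rw [hb'def, hll]; simp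
                have hstep : stp G (!b') e = some z :=
                  stp_symm hfull (hist_cons.mp hHz).1
                rw [hb'eq, Bool.not_not] at hstep
                rw [hstep] at hw; cases hw; simp
              · obtain ⟨w', hw', hsw'⟩ := histC hfull h' b' z hHz hbig e hxl
                have hmode : xor b' (decide (h'.length % 2 = 1)) = b := by
                  rw [hb'def]
                  have h1 : h'.length = l.length - 1 := by omega
                  rw [h1]
                  exact xor_twice b _
                rw [hmode] at hsw'
                rw [hsw'] at hw; cases hw
                exact List.mem_cons_of_mem _ hw'
            · rw [hm, hstart] at hw; cases hw
          · exact (histB hfull h' b' z hHz hndzh x hxh hxl m w hw).1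
      · -- classification : alternating path
        refine Or.inr (Or.inl ⟨hndl, hlen2, b, hAC, ?_, ?_⟩)
        · intro e' he'
          have hee : e = e' := by rw [hhd] at he'; simpa using he'
          rw [← hee]
          cases b
          · have h1 : stp G true e = none := by simpa using hstart
            have := not_inner_sos ((stp_true_none_iff hfull).mp h1)
            simpa using this
          · have h1 : stp G false e = none := by simpa using hstart
            have := not_inner_sos ((stp_false_none_iff hfull).mp h1)
            simpa using this
        · intro z' hz'
          have hzz : z = z' := by rw [hzl] at hz'; simpa using hz'
          rw [← hzz]
          rw [selector_eq b hlen2, ← hb'def]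
          clear_value b'
          cases b'
          · have := not_inner_sos ((stp_false_none_iff hfull).mp hstopn)
            simpa using this
          · have := not_inner_sos ((stp_true_none_iff hfull).mp hstopn)
            simpa using this
  · -- the walk closed up: an alternating even cycle
    obtain ⟨hflast, heven0⟩ := histA hfull h' b' z f hHz hndzh hsf hfmem
    have hfe : f = e := by rw [hflast] at hlast; simpa using hlast
    rw [hfe] at hsf
    have heven : l.length % 2 = 0 := by
      simp only [List.length_cons] at heven0; omega
    have hlen2 : 2 ≤ l.length := by
      have := List.length_pos_iff.mpr hne; omega
    have hh'ne : h' ≠ [] := by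
      intro hcon; rw [hcon] at hlen; simp at hlen; omega
    refine ⟨l, hleq, hel, hndl, hunused, ?_, ?_⟩
    · -- closure
      intro x hx m w hw
      rw [hmem] at hx
      rw [hmem]
      rcases List.mem_cons.mp hx with rfl | hxh
      · rcases mode_cases m b' with hm | hm
        · rw [hm, hsf] at hw; cases hw
          exact (hmem e).mp hel
        · rcases h' with _ | ⟨g, t⟩
          · exact absurd rfl hh'ne
          · obtain ⟨hzg, -⟩ := hist_cons.mp hHz
            rw [hm, hzg] at hw; cases hw; simp
      · by_cases hxl : h'.getLast? = some x
        · have hxe : x = e := by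
            have hx2 : (z :: h').getLast? = some x := by
              rcases h' with _ | ⟨g, t⟩
              · exact absurd rfl hh'ne
              · rw [List.getLast?_cons_cons]; exact hxl
            rw [hx2] at hlast; simpa using hlast
          rw [hxe] at hw hxl
          rcases mode_cases m b' with hm | hm
          · have hstep : stp G b' e = some z := stp_symm hfull hsf
            rw [hm, hstep] at hw; cases hw; simp
          · rw [hm] at hw
            rcases Nat.lt_or_ge h'.length 2 with hsmall | hbig
            · obtain ⟨g, rfl⟩ : ∃ g, h' = [g] := by
                rcases h' with _ | ⟨g, t⟩
                · exact absurd rfl hh'ne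
                · rcases t with _ | ⟨u, t'⟩
                  · exact ⟨g, rfl⟩
                  · simp only [List.length_cons] at hsmall; omega
              have hge : g = e := by simpa using hxl
              rw [hge] at hHz
              have hstep : stp G (!b') e = some z :=
                stp_symm hfull (hist_cons.mp hHz).1
              rw [hstep] at hw; cases hw; simp
            · obtain ⟨w', hw', hsw'⟩ := histC hfull h' b' z hHz hbig e hxl
              have hpar : h'.length % 2 = 1 := by omega
              have hmode : xor b' (decide (h'.length % 2 = 1)) = !b' := by
                simp [hpar]
              rw [hmode] at hsw'
              rw [hsw'] at hw; cases hw
              exact List.mem_cons_of_mem _ hw'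
        · exact (histB hfull h' b' z hHz hndzh x hxh hxl m w hw).1
    · -- classification : even alternating cycle
      refine Or.inl ⟨hndl, hlen2, Nat.even_iff.mpr heven, b, e, hhd, ?_⟩
      apply altChain_append e l b hAC z hzl
      rw [← hb'def]
      exact rel_altrel (rel_of_stp_some hsf)

open Classical in
/-- Process a list of seeds, extracting components greedily. -/
noncomputable def run (G : DAG) : List (G.E × Bool) → Finset G.E → List (List G.E)
  | [], _ => []
  | (e, b) :: rest, used =>
      if e ∈ used then run G rest used
      else if (stp G (!b) e = none ∨ ∀ x, x ∉ used → ∀ m, stp G m x ≠ none) then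
        walkV G (Fintype.card G.E) b e [] ::
          run G rest (used ∪ (walkV G (Fintype.card G.E) b e []).toFinset)
      else run G rest used

theorem run_spec (hfull : G.Full) : ∀ (seeds : List (G.E × Bool))
    (used : Finset G.E), Closed G used →
    (∀ l ∈ run G seeds used,
      G.IsAltCycle l ∨ G.IsAltPath l ∨ G.IsSourceSinkEdge l) ∧
    (run G seeds used).flatten.Nodup ∧
    (∀ x ∈ (run G seeds used).flatten, x ∉ used) ∧
    Closed G (used ∪ (run G seeds used).flatten.toFinset) ∧
    (∀ p ∈ seeds, stp G (!p.2) p.1 = none →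
      p.1 ∈ used ∨ p.1 ∈ (run G seeds used).flatten) ∧
    ((∀ x, x ∉ used → ∀ m, stp G m x ≠ none) →
      ∀ p ∈ seeds, p.1 ∈ used ∨ p.1 ∈ (run G seeds used).flatten) := by
  classical
  intro seeds
  induction seeds with
  | nil =>
    intro used hcl
    refine ⟨by simp [run], by simp [run], by simp [run], ?_, by simp, by simp⟩
    simpa [run] using hcl
  | cons p rest ih =>
    obtain ⟨e, b⟩ := p
    intro used hcl
    by_cases he : e ∈ used
    · have hrw : run G ((e, b) :: rest) used = run G rest used := by
        simp [run, he]
      obtain ⟨ih1, ih2, ih3, ih4, ih5, ih6⟩ := ih used hcl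
      rw [hrw]
      refine ⟨ih1, ih2, ih3, ih4, ?_, ?_⟩
      · intro p hp hst
        rcases List.mem_cons.mp hp with rfl | hp'
        · exact Or.inl he
        · exact ih5 p hp' hst
      · intro hguar p hp
        rcases List.mem_cons.mp hp with rfl | hp'
        · exact Or.inl he
        · exact ih6 hguar p hp'
    · by_cases hcond : (stp G (!b) e = none ∨
        ∀ x, x ∉ used → ∀ m, stp G m x ≠ none)
      · obtain ⟨l, hleq, hel, hndl, hlunused, hlclosed, hclass⟩ :=
          comp_spec hfull hcl he b hcond
        have hrw : run G ((e, b) :: rest) used =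
            l :: run G rest (used ∪ l.toFinset) := by
          simp only [run, if_neg he, if_pos hcond, hleq]
        have hclused' : Closed G (used ∪ l.toFinset) := by
          intro x hx m w hw
          rcases Finset.mem_union.mp hx with hx' | hx'
          · exact Finset.mem_union_left _ (hcl x hx' m w hw)
          · exact Finset.mem_union_right _
              (List.mem_toFinset.mpr
                (hlclosed x (List.mem_toFinset.mp hx') m w hw))
        obtain ⟨ih1, ih2, ih3, ih4, ih5, ih6⟩ := ih (used ∪ l.toFinset) hclused'
        rw [hrw]
        have hflat : (l :: run G rest (used ∪ l.toFinset)).flatten =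
            l ++ (run G rest (used ∪ l.toFinset)).flatten := rfl
        refine ⟨?_, ?_, ?_, ?_, ?_, ?_⟩
        · intro l' hl'
          rcases List.mem_cons.mp hl' with rfl | hl''
          · exact hclass
          · exact ih1 l' hl''
        · rw [hflat]
          refine List.Nodup.append hndl ih2 ?_
          intro x hx1 hx2
          exact (ih3 x hx2) (Finset.mem_union_right _ (List.mem_toFinset.mpr hx1))
        · rw [hflat]
          intro x hx
          rcases List.mem_append.mp hx with hx' | hx'
          · exact hlunused x hx'
          · intro hxu
            exact (ih3 x hx') (Finset.mem_union_left _ hxu)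
        · rw [hflat]
          have hseteq : used ∪ (l ++
              (run G rest (used ∪ l.toFinset)).flatten).toFinset =
              (used ∪ l.toFinset) ∪
                (run G rest (used ∪ l.toFinset)).flatten.toFinset := by
            rw [List.toFinset_append, Finset.union_assoc]
          rw [hseteq]
          exact ih4
        · intro p hp hst
          rcases List.mem_cons.mp hp with rfl | hp'
          · exact Or.inr (by rw [hflat]; exact List.mem_append_left _ hel)
          · rcases ih5 p hp' hst with h | h
            · rcases Finset.mem_union.mp h with h' | h'
              · exact Or.inl h'
              · exact Or.inr (by
                  rw [hflat]
                  exact List.mem_append_left _ (List.mem_toFinset.mp h'))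
            · exact Or.inr (by rw [hflat]; exact List.mem_append_right _ h)
        · intro hguar p hp
          have hguar' : ∀ x, x ∉ used ∪ l.toFinset → ∀ m, stp G m x ≠ none := by
            intro x hx
            exact hguar x (fun hxu => hx (Finset.mem_union_left _ hxu))
          rcases List.mem_cons.mp hp with rfl | hp'
          · exact Or.inr (by rw [hflat]; exact List.mem_append_left _ hel)
          · rcases ih6 hguar' p hp' with h | h
            · rcases Finset.mem_union.mp h with h' | h'
              · exact Or.inl h'
              · exact Or.inr (by
                  rw [hflat]
                  exact List.mem_append_left _ (List.mem_toFinset.mp h'))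
            · exact Or.inr (by rw [hflat]; exact List.mem_append_right _ h)
      · have hrw : run G ((e, b) :: rest) used = run G rest used := by
          simp only [run, if_neg he, if_neg hcond]
        obtain ⟨ih1, ih2, ih3, ih4, ih5, ih6⟩ := ih used hcl
        rw [hrw]
        refine ⟨ih1, ih2, ih3, ih4, ?_, ?_⟩
        · intro p hp hst
          rcases List.mem_cons.mp hp with rfl | hp'
          · exact absurd (Or.inl hst) hcond
          · exact ih5 p hp' hst
        · intro hguar p hp
          rcases List.mem_cons.mp hp with rfl | hp'
          · exact absurd (Or.inr hguar) hcond
          · exact ih6 hguar p hp'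

end DAGAux

/-- Every full DAG admits a decomposition of its edge set into
edge-disjoint subgraphs, each of which is an alternating even cycle, an
alternating path with endpoints sources or sinks, or a single source-to-sink
edge. -/
theorem full_dag_decomposition (G : DAG) (hfull : G.Full) :
    ∃ C : List (List G.E), G.IsDecomposition C := by
  classical
  have h0 : DAGAux.Closed G ∅ := by intro x hx; simp at hx
  set seeds := (Finset.univ : Finset (G.E × Bool)).toList with hseeds
  obtain ⟨hclass1, hnd1, hun1, hcl1, hcov1, -⟩ := DAGAux.run_spec hfull seeds ∅ h0
  set out1 := DAGAux.run G seeds ∅ with hout1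
  have hcl1' : DAGAux.Closed G (∅ ∪ out1.flatten.toFinset) := hcl1
  have hguar : ∀ x, x ∉ (∅ : Finset G.E) ∪ out1.flatten.toFinset →
      ∀ m, DAGAux.stp G m x ≠ none := by
    intro x hx m hnone
    have hmem : ((x, !m) : G.E × Bool) ∈ seeds := by
      rw [hseeds]; exact Finset.mem_toList.mpr (Finset.mem_univ _)
    have hst : DAGAux.stp G (!(x, !m).2) (x, !m).1 = none := by
      simpa using hnone
    rcases hcov1 (x, !m) hmem hst with h | h
    · simp at h
    · exact hx (Finset.mem_union_right _ (List.mem_toFinset.mpr h))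
  obtain ⟨hclass2, hnd2, hun2, -, -, hcov2⟩ :=
    DAGAux.run_spec hfull seeds (∅ ∪ out1.flatten.toFinset) hcl1'
  set out2 := DAGAux.run G seeds (∅ ∪ out1.flatten.toFinset) with hout2
  refine ⟨out1 ++ out2, ?_, ?_, ?_⟩
  · rw [List.flatten_append]
    refine List.Nodup.append hnd1 hnd2 ?_
    intro x hx1 hx2
    exact (hun2 x hx2) (Finset.mem_union_right _ (List.mem_toFinset.mpr hx1))
  · intro e
    rw [List.flatten_append, List.mem_append]
    have hmem : ((e, true) : G.E × Bool) ∈ seeds := by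
      rw [hseeds]; exact Finset.mem_toList.mpr (Finset.mem_univ _)
    rcases hcov2 hguar (e, true) hmem with h | h
    · rcases Finset.mem_union.mp h with h' | h'
      · simp at h'
      · exact Or.inl (List.mem_toFinset.mp h')
    · exact Or.inr h
  · intro l hl
    rcases List.mem_append.mp hl with h | h
    · exact hclass1 l h
    · exact hclass2 l h
end
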